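/- arXiv:1808.01707 — 2 statements merged into one kernel-verified Lean document; each statement's English description precedes it below -/
import Mathlib

section
/- Let f₁, f₂ : ℝ → ℝ be strictly concave with continuous derivatives, p₁ > 0, and f₂'(0) > f₁'(p₁). Then there exists δ ∈ (0, p₁) such that f₁(p₁−δ) + f₂(δ) > f₁(p₁) + f₂(0). -/
open Filter Topology

theorem HasDerivAt.eventually_lt_of_pos {g : ℝ → ℝ} {g' x : ℝ} (hg : HasDerivAt g g' x)
    (hg' : 0 < g') : ∀ᶠ y in 𝓝[>] x, g x < g y := by
  have hslope : ∀ᶠ y in 𝓝[>] x, 0 < slope g x y :=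
    (hasDerivAt_iff_tendsto_slope_left_right.mp hg).2.eventually (lt_mem_nhds hg')
  filter_upwards [hslope, self_mem_nhdsWithin] with y hy hxy
  rw [slope_def_field] at hy
  exact sub_pos.mp ((div_pos_iff_of_pos_right (sub_pos.mpr hxy)).mp hy)

theorem stmt_2_general (f₁ f₂ : ℝ → ℝ)
    (h₁d : Differentiable ℝ f₁) (h₂d : Differentiable ℝ f₂)
    (p₁ : ℝ) (hp₁ : 0 < p₁)
    (hlt : deriv f₁ p₁ < deriv f₂ 0) :
    ∃ δ : ℝ, 0 < δ ∧ δ < p₁ ∧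
      f₁ p₁ + f₂ 0 < f₁ (p₁ - δ) + f₂ δ := by
  have htransfer : HasDerivAt (fun δ ↦ f₁ (p₁ - δ) + f₂ δ) (-deriv f₁ p₁ + deriv f₂ 0) 0 := by
    have h₁ : HasDerivAt (fun δ ↦ f₁ (p₁ - δ)) (-deriv f₁ p₁) 0 := by
      simpa using ((h₁d (p₁ - 0)).hasDerivAt).comp_const_sub p₁ 0
    exact h₁.add (h₂d 0).hasDerivAt
  have hgain := htransfer.eventually_lt_of_pos (by linarith)
  have hsmall : ∀ᶠ δ in 𝓝[>] (0 : ℝ), δ ∈ Set.Ioo 0 p₁ := Ioo_mem_nhdsGT hp₁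
  obtain ⟨δ, hδ, hδgain⟩ := (hsmall.and hgain).exists
  exact ⟨δ, hδ.1, hδ.2, by simpa using hδgain⟩

/-- Exchange argument for an inactive subchannel: if f₂'(0) > f₁'(p₁) with p₁ > 0,
a small transfer of power from subchannel 1 to subchannel 2 strictly improves the sum. -/
theorem stmt_2 (f₁ f₂ : ℝ → ℝ)
    (h₁c : StrictConcaveOn ℝ Set.univ f₁) (h₂c : StrictConcaveOn ℝ Set.univ f₂)
    (h₁d : Differentiable ℝ f₁) (h₂d : Differentiable ℝ f₂)
    (h₁cd : Continuous (deriv f₁)) (h₂cd : Continuous (deriv f₂))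
    (p₁ : ℝ) (hp₁ : 0 < p₁)
    (hlt : deriv f₁ p₁ < deriv f₂ 0) :
    ∃ δ : ℝ, 0 < δ ∧ δ < p₁ ∧
      f₁ p₁ + f₂ 0 < f₁ (p₁ - δ) + f₂ δ :=
  stmt_2_general f₁ f₂ h₁d h₂d p₁ hp₁ hlt
end

section
/- For the ascending-sum-constraint problem P4 (maximize ∑ f_k(p_k) s.t. ∑_{k=1}^J p_k ≤ P_J for all J = 1,…,K and γ_k ≤ p_k ≤ τ_k), let (p*) be the solution of the relaxed problem using only the last constraint ∑_{k=1}^K p_k ≤ P_K, and suppose J_min is the smallest index with ∑_{k=1}^{J_min} p*_k > P_{J_min}. Then the solution (p̂₁,…,p̂_{J_min}) of the restricted problem over the first J_min subchannels with budget P_{J_min} and box constraints satisfies p̂_k ≤ p*_k for all k ≤ J_min, and hence satisfies all ascending constraints ∑_{k=1}^J p̂_k ≤ P_J for J < J_min. -/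
/-!
Suppose `p̂ k > p* k` for some `k < J_min`. Since `∑ p̂ ≤ P_{J_min} < ∑ p*` over the first
`J_min` coordinates, also `p̂ j < p* j` for some `j`. For small `ε > 0`, moving `ε` from `j` to `k`
in `p*`, and from `k` to `j` in `p̂`, keeps both allocations feasible, so by optimality neither
move gains. But strict concavity makes the increments `t ↦ f (t + ε) - f t` strictly decreasing,
and since `p* k < p̂ k - ε` and `p̂ j < p* j - ε` the two "no gain" inequalities add up to `0 < 0`.
The ascending constraints for `J < J_min` then follow from those of `p*`.
-/

open Finset

section Exchange

variable {𝕜 : Type*} [Field 𝕜] [LinearOrder 𝕜] [IsStrictOrderedRing 𝕜] {f : 𝕜 → 𝕜} {ε : 𝕜}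

theorem StrictConcaveOn.strictAnti_sub_add (hf : StrictConcaveOn 𝕜 Set.univ f) (hε : 0 < ε) :
    StrictAnti fun t => f (t + ε) - f t := by
  intro x y hxy
  have hleft := hf.secant_strict_mono (a := x) (x := x + ε) (y := y + ε) trivial trivial trivial
    (by linarith) (by linarith) (by linarith)
  have hright := hf.secant_strict_mono (a := y + ε) (x := x) (y := y) trivial trivial trivial
    (by linarith) (by linarith) hxy
  simp only [← neg_sub (f (y + ε)), ← neg_sub (y + ε), neg_div_neg_eq, add_sub_cancel_left]
    at hright hleft
  -- slope on `[y, y + ε]` < slope on `[x, y + ε]` < slope on `[x, x + ε]`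
  have := hright.trans hleft
  rwa [div_lt_div_iff_of_pos_right hε] at this

end Exchange

section BoxBudget

variable {ι : Type*} {s t : Finset ι} {P Q ε : ℝ} {γ τ p q : ι → ℝ}
  {f : ι → ℝ → ℝ} {i j : ι}

def boxBudgetSet (s : Finset ι) (P : ℝ) (γ τ : ι → ℝ) : Set (ι → ℝ) :=
  {q | ∑ k ∈ s, q k ≤ P ∧ ∀ k ∈ s, γ k ≤ q k ∧ q k ≤ τ k}

theorem mem_boxBudgetSet_range {n : ℕ} {P : ℝ} {γ τ q : ℕ → ℝ} :
    q ∈ boxBudgetSet (range n) P γ τ ↔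
      ∑ k ∈ range n, q k ≤ P ∧ ∀ k < n, γ k ≤ q k ∧ q k ≤ τ k := by
  simp only [boxBudgetSet, Set.mem_ofPred_eq, mem_range]

variable [DecidableEq ι]

def transfer (p : ι → ℝ) (i j : ι) (ε : ℝ) : ι → ℝ :=
  Function.update (Function.update p i (p i + ε)) j (p j - ε)

theorem sum_eq_add_add_sum_erase_erase {M : Type*} [AddCommMonoid M] (g : ι → M)
    (hi : i ∈ s) (hj : j ∈ s) (hij : i ≠ j) :
    ∑ k ∈ s, g k = g i + g j + ∑ k ∈ (s.erase i).erase j, g k := by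
  rw [← add_sum_erase s g hi, ← add_sum_erase _ g (mem_erase.2 ⟨hij.symm, hj⟩), add_assoc]

theorem sum_apply_transfer (g : ι → ℝ → ℝ) (hi : i ∈ s) (hj : j ∈ s) (hij : i ≠ j) :
    ∑ k ∈ s, g k (transfer p i j ε k) + (g i (p i) + g j (p j)) =
      ∑ k ∈ s, g k (p k) + (g i (p i + ε) + g j (p j - ε)) := by
  have hrest : ∀ k ∈ (s.erase i).erase j, transfer p i j ε k = p k := fun k hk => by
    obtain ⟨hkj, hk'⟩ := mem_erase.1 hk
    simp [transfer, hkj, (mem_erase.1 hk').1]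
  rw [sum_eq_add_add_sum_erase_erase _ hi hj hij, sum_eq_add_add_sum_erase_erase _ hi hj hij,
    sum_congr rfl fun k hk => congrArg (g k) (hrest k hk)]
  simp only [transfer, Function.update_self, Function.update_of_ne hij]
  ring

theorem sum_transfer (hi : i ∈ s) (hj : j ∈ s) (hij : i ≠ j) :
    ∑ k ∈ s, transfer p i j ε k = ∑ k ∈ s, p k := by
  linarith [sum_apply_transfer (p := p) (ε := ε) (fun _ x => x) hi hj hij]

theorem transfer_mem_boxBudgetSet (hp : p ∈ boxBudgetSet s P γ τ) (hi : i ∈ s) (hj : j ∈ s)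
    (hij : i ≠ j) (hε : 0 ≤ ε) (hτ : p i + ε ≤ τ i) (hγ : γ j ≤ p j - ε) :
    transfer p i j ε ∈ boxBudgetSet s P γ τ := by
  refine ⟨(sum_transfer hi hj hij).trans_le hp.1, fun k hk => ?_⟩
  have hbox := hp.2 k hk
  by_cases hkj : k = j
  · subst hkj
    simp only [transfer, Function.update_self]
    constructor <;> linarith
  by_cases hki : k = i
  · subst hki
    simp only [transfer, Function.update_of_ne hkj, Function.update_self]
    constructor <;> linarith
  simpa [transfer, hkj, hki] using hbox

theorem IsMaxOn.add_le_of_transfer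
    (hopt : IsMaxOn (fun q => ∑ k ∈ s, f k (q k)) (boxBudgetSet s P γ τ) p)
    (hp : p ∈ boxBudgetSet s P γ τ) (hi : i ∈ s) (hj : j ∈ s) (hij : i ≠ j) (hε : 0 ≤ ε)
    (hτ : p i + ε ≤ τ i) (hγ : γ j ≤ p j - ε) :
    f i (p i + ε) + f j (p j - ε) ≤ f i (p i) + f j (p j) := by
  have hle : ∑ k ∈ s, f k (transfer p i j ε k) ≤ ∑ k ∈ s, f k (p k) :=
    hopt (transfer_mem_boxBudgetSet hp hi hj hij hε hτ hγ)
  linarith [sum_apply_transfer (p := p) (ε := ε) f hi hj hij]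

theorem le_of_isMaxOn_boxBudgetSet_of_budget_lt (hst : s ⊆ t)
    (hconc : ∀ k ∈ s, StrictConcaveOn ℝ Set.univ (f k))
    (hp : p ∈ boxBudgetSet t P γ τ)
    (hpopt : IsMaxOn (fun q => ∑ k ∈ t, f k (q k)) (boxBudgetSet t P γ τ) p)
    (hq : q ∈ boxBudgetSet s Q γ τ)
    (hqopt : IsMaxOn (fun q => ∑ k ∈ s, f k (q k)) (boxBudgetSet s Q γ τ) q)
    (hQ : Q < ∑ k ∈ s, p k) :
    ∀ k ∈ s, q k ≤ p k := by
  by_contra! ⟨i, hi, hpq_i⟩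
  obtain ⟨j, hj, hqp_j⟩ : ∃ j ∈ s, q j < p j := exists_lt_of_sum_lt (hq.1.trans_lt hQ)
  have hij : i ≠ j := by rintro rfl; linarith
  have hδ : 0 < min (q i - p i) (p j - q j) := lt_min (by linarith) (by linarith)
  set ε := min (q i - p i) (p j - q j) / 2
  have hε : 0 < ε := half_pos hδ
  have hεi : ε < q i - p i := (half_lt_self hδ).trans_le (min_le_left _ _)
  have hεj : ε < p j - q j := (half_lt_self hδ).trans_le (min_le_right _ _)
  have hp_opt := hpopt.add_le_of_transfer hp (hst hi) (hst hj) hij hε.le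
    (by linarith [(hq.2 i hi).2]) (by linarith [(hq.2 j hj).1])
  have hq_opt := hqopt.add_le_of_transfer hq hj hi hij.symm hε.le
    (by linarith [(hp.2 j (hst hj)).2]) (by linarith [(hp.2 i (hst hi)).1])
  have hgain_i := (hconc i hi).strictAnti_sub_add hε (show p i < q i - ε by linarith)
  have hgain_j := (hconc j hj).strictAnti_sub_add hε (show q j < p j - ε by linarith)
  simp only [sub_add_cancel] at hgain_i hgain_j
  linarith

end BoxBudget

theorem stmt_15_general (K : ℕ) (f : ℕ → ℝ → ℝ) (Pc : ℕ → ℝ) (γ τ : ℕ → ℝ)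
    (hconc : ∀ k, StrictConcaveOn ℝ Set.univ (f k))
    (pstar : ℕ → ℝ)
    (hstar_feas : (∑ k ∈ Finset.range K, pstar k) ≤ Pc K ∧
      ∀ k < K, γ k ≤ pstar k ∧ pstar k ≤ τ k)
    (hstar_opt : ∀ q : ℕ → ℝ,
      ((∑ k ∈ Finset.range K, q k) ≤ Pc K ∧
        ∀ k < K, γ k ≤ q k ∧ q k ≤ τ k) →
      (∑ k ∈ Finset.range K, f k (q k)) ≤ ∑ k ∈ Finset.range K, f k (pstar k))
    (Jmin : ℕ) (hJK : Jmin ≤ K)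
    (hviol : Pc Jmin < ∑ k ∈ Finset.range Jmin, pstar k)
    (hminimal : ∀ J, 1 ≤ J → J < Jmin →
      (∑ k ∈ Finset.range J, pstar k) ≤ Pc J)
    (phat : ℕ → ℝ)
    (hhat_feas : (∑ k ∈ Finset.range Jmin, phat k) ≤ Pc Jmin ∧
      ∀ k < Jmin, γ k ≤ phat k ∧ phat k ≤ τ k)
    (hhat_opt : ∀ q : ℕ → ℝ,
      ((∑ k ∈ Finset.range Jmin, q k) ≤ Pc Jmin ∧
        ∀ k < Jmin, γ k ≤ q k ∧ q k ≤ τ k) →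
      (∑ k ∈ Finset.range Jmin, f k (q k)) ≤
        ∑ k ∈ Finset.range Jmin, f k (phat k)) :
    (∀ k < Jmin, phat k ≤ pstar k) ∧
    (∀ J, 1 ≤ J → J < Jmin → (∑ k ∈ Finset.range J, phat k) ≤ Pc J) := by
  have hle : ∀ k ∈ range Jmin, phat k ≤ pstar k :=
    le_of_isMaxOn_boxBudgetSet_of_budget_lt (range_subset_range.2 hJK) (fun k _ => hconc k)
      (mem_boxBudgetSet_range.2 hstar_feas)
      (fun q hq => hstar_opt q (mem_boxBudgetSet_range.1 hq))
      (mem_boxBudgetSet_range.2 hhat_feas)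
      (fun q hq => hhat_opt q (mem_boxBudgetSet_range.1 hq)) hviol
  refine ⟨fun k hk => hle k (mem_range.2 hk), fun J hJ hJlt => ?_⟩
  calc ∑ k ∈ range J, phat k
      ≤ ∑ k ∈ range J, pstar k :=
        sum_le_sum fun k hk => hle k (mem_range.2 ((mem_range.1 hk).trans hJlt))
    _ ≤ Pc J := hminimal J hJ hJlt

/-- Lemma 8: feasibility of the recursive decomposition for the
ascending-sum-constraint problem P4. -/
theorem stmt_15 (K : ℕ) (f : ℕ → ℝ → ℝ) (Pc : ℕ → ℝ) (γ τ : ℕ → ℝ)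
    (hγτ : ∀ k, γ k ≤ τ k) (hPmono : Monotone Pc)
    (hmono : ∀ k, StrictMono (f k))
    (hconc : ∀ k, StrictConcaveOn ℝ Set.univ (f k))
    (hdiff : ∀ k, Differentiable ℝ (f k))
    (hcont : ∀ k, Continuous (deriv (f k)))
    (pstar : ℕ → ℝ)
    (hstar_feas : (∑ k ∈ Finset.range K, pstar k) ≤ Pc K ∧
      ∀ k < K, γ k ≤ pstar k ∧ pstar k ≤ τ k)
    (hstar_opt : ∀ q : ℕ → ℝ,
      ((∑ k ∈ Finset.range K, q k) ≤ Pc K ∧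
        ∀ k < K, γ k ≤ q k ∧ q k ≤ τ k) →
      (∑ k ∈ Finset.range K, f k (q k)) ≤ ∑ k ∈ Finset.range K, f k (pstar k))
    (Jmin : ℕ) (hJ1 : 1 ≤ Jmin) (hJK : Jmin ≤ K)
    (hviol : Pc Jmin < ∑ k ∈ Finset.range Jmin, pstar k)
    (hminimal : ∀ J, 1 ≤ J → J < Jmin →
      (∑ k ∈ Finset.range J, pstar k) ≤ Pc J)
    (phat : ℕ → ℝ)
    (hhat_feas : (∑ k ∈ Finset.range Jmin, phat k) ≤ Pc Jmin ∧
      ∀ k < Jmin, γ k ≤ phat k ∧ phat k ≤ τ k)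
    (hhat_opt : ∀ q : ℕ → ℝ,
      ((∑ k ∈ Finset.range Jmin, q k) ≤ Pc Jmin ∧
        ∀ k < Jmin, γ k ≤ q k ∧ q k ≤ τ k) →
      (∑ k ∈ Finset.range Jmin, f k (q k)) ≤
        ∑ k ∈ Finset.range Jmin, f k (phat k)) :
    (∀ k < Jmin, phat k ≤ pstar k) ∧
    (∀ J, 1 ≤ J → J < Jmin → (∑ k ∈ Finset.range J, phat k) ≤ Pc J) :=
  stmt_15_general K f Pc γ τ hconc pstar hstar_feas hstar_opt Jmin hJK hviol hminimal phat hhat_feas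
    hhat_opt
end
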